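/- arXiv:2111.07415 — 2 statements merged into one kernel-verified Lean document; each statement's English description precedes it below -/
import Mathlib

section
/- For every i ≥ 3, the contribution counts used in the encoding-decoding rule hold: the number of codewords of RC_{i+1} whose left-most bit is 0 equals N(i−2) + N(i−3), the number of codewords of RC_{i+2} whose left-most two bits are 00 equals N(i−2), and the number of codewords of RC_{i+3} beginning with 000 from the left, as well as the number beginning with 010 from the left, equals 0. -/
/-- The RR constraint: no index `i` with `i + 2 ≤ m - 1` such that `c i = 0` and `c (i+2) = 0`
(bit `false` plays the role of `0`, bit `true` the role of `1`). -/
def RRok (m : ℕ) (c : Fin m → Bool) : Prop :=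
  ∀ i j : Fin m, (j : ℕ) = (i : ℕ) + 2 → ¬(c i = false ∧ c j = false)

instance (m : ℕ) : DecidablePred (RRok m) := fun c => by
  unfold RRok; infer_instance

/-- The LOCO code `RC_m`: all binary words of length `m` satisfying the RR constraint. -/
def RC (m : ℕ) : Finset (Fin m → Bool) := Finset.univ.filter (RRok m)

/-- `N m = |RC_m|`. -/
def N (m : ℕ) : ℕ := (RC m).card

/-!
A zero at position `a + 2` forces a one at position `a`. Hence a word of `RC_{i+1}` starting
with `0` starts with `011` or `0011`, and a word of `RC_{i+2}` starting with `00` starts with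
`0011`. Below a block `11` the remaining bits are unconstrained by the block, so the words with
such a fixed head are in bijection with `RC` of the remaining length.
-/

lemma mem_RC {m : ℕ} {c : Fin m → Bool} : c ∈ RC m ↔ RRok m c := by
  simp [RC]

lemma RRok.eq_true_of_add_two_eq_false {m : ℕ} {c : Fin m → Bool} (hc : RRok m c) {a : ℕ}
    (ha : a + 2 < m) (h : c ⟨a + 2, ha⟩ = false) : c ⟨a, by omega⟩ = true := by
  by_contra h'
  exact hc _ _ rfl ⟨Bool.eq_false_iff.2 h', h⟩

/-- For `m = n + 4` (resp. `n + 3`): `c` starts with `0011` (resp. `011`) from the left. -/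
def HasPaddedHead (n : ℕ) {m : ℕ} (c : Fin m → Bool) : Prop :=
  ∀ p : Fin m, n ≤ (p : ℕ) → c p = decide ((p : ℕ) ≤ n + 1)

instance (n m : ℕ) : DecidablePred (HasPaddedHead n (m := m)) := fun c => by
  unfold HasPaddedHead; infer_instance

lemma RRok.castLE {n m : ℕ} (h : n ≤ m) {c : Fin m → Bool} (hc : RRok m c) :
    RRok n (c ∘ Fin.castLE h) :=
  fun _ _ hab => hc _ _ hab

def padHead (n m : ℕ) (d : Fin n → Bool) (p : Fin m) : Bool :=
  if h : (p : ℕ) < n then d ⟨p, h⟩ else decide ((p : ℕ) ≤ n + 1)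

lemma RRok.padHead {n m : ℕ} (hm : m ≤ n + 4) {d : Fin n → Bool} (hd : RRok n d) :
    RRok m (padHead n m d) := by
  intro a b hab
  by_cases hb : (b : ℕ) < n
  · simp only [_root_.padHead, dif_pos hb, dif_pos (show (a : ℕ) < n by omega)]
    exact hd ⟨a, by omega⟩ ⟨b, hb⟩ hab
  · by_cases ha : (a : ℕ) < n
    · have hb' : (b : ℕ) ≤ n + 1 := by omega
      simp [_root_.padHead, dif_neg hb, hb']
    · have ha' : (a : ℕ) ≤ n + 1 := by omega
      simp [_root_.padHead, dif_neg ha, ha']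

lemma hasPaddedHead_padHead {n m : ℕ} (d : Fin n → Bool) : HasPaddedHead n (padHead n m d) :=
  fun p hp => by simp [padHead, dif_neg (show ¬ (p : ℕ) < n by omega)]

lemma card_filter_hasPaddedHead {n m : ℕ} (hnm : n ≤ m) (hm : m ≤ n + 4) :
    ((RC m).filter (HasPaddedHead n)).card = N n := by
  refine Finset.card_nbij' (· ∘ Fin.castLE hnm) (padHead n m) ?_ ?_ ?_ ?_
  · intro c hc
    simp only [Finset.coe_filter, Set.mem_ofPred_eq, mem_RC] at hc
    exact mem_RC.2 (hc.1.castLE hnm)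
  · intro d hd
    simp only [Finset.coe_filter, Set.mem_ofPred_eq, mem_RC, Finset.mem_coe] at hd ⊢
    exact ⟨hd.padHead hm, hasPaddedHead_padHead d⟩
  · intro c hc
    simp only [Finset.coe_filter, Set.mem_ofPred_eq] at hc
    funext p
    by_cases hp : (p : ℕ) < n
    · simp [padHead, dif_pos hp]
    · simp only [padHead, dif_neg hp]
      exact (hc.2 p (by omega)).symm
  · intro d _
    funext k
    simp [padHead]

lemma card_filter_RC_eq_N {n m : ℕ} (hnm : n ≤ m) (hm : m ≤ n + 4) {P : (Fin m → Bool) → Prop}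
    [DecidablePred P] (hP : ∀ c ∈ RC m, P c ↔ HasPaddedHead n c) :
    ((RC m).filter P).card = N n := by
  rw [Finset.filter_congr hP, card_filter_hasPaddedHead hnm hm]

lemma hasPaddedHead_iff_of_eq_add_three {n m : ℕ} (hm : m = n + 3) {c : Fin m → Bool}
    (hc : RRok m c) :
    (c ⟨n + 2, by omega⟩ = false ∧ c ⟨n + 1, by omega⟩ = true) ↔ HasPaddedHead n c := by
  constructor
  · rintro ⟨h2, h1⟩ ⟨p, hp⟩ (hnp : n ≤ p)
    have h0 := hc.eq_true_of_add_two_eq_false (by omega) h2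
    obtain rfl | rfl | rfl : p = n ∨ p = n + 1 ∨ p = n + 2 := by omega
    all_goals simpa
  · intro h
    exact ⟨by simpa using h ⟨n + 2, _⟩ (by simp), by simpa using h ⟨n + 1, _⟩ (by simp)⟩

lemma hasPaddedHead_iff_of_eq_add_four {n m : ℕ} (hm : m = n + 4) {c : Fin m → Bool}
    (hc : RRok m c) :
    (c ⟨n + 3, by omega⟩ = false ∧ c ⟨n + 2, by omega⟩ = false) ↔ HasPaddedHead n c := by
  constructor
  · rintro ⟨h3, h2⟩ ⟨p, hp⟩ (hnp : n ≤ p)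
    have h1 := hc.eq_true_of_add_two_eq_false (by omega) h3
    have h0 := hc.eq_true_of_add_two_eq_false (by omega) h2
    obtain rfl | rfl | rfl | rfl : p = n ∨ p = n + 1 ∨ p = n + 2 ∨ p = n + 3 := by omega
    all_goals simpa
  · intro h
    exact ⟨by simpa using h ⟨n + 3, _⟩ (by simp), by simpa using h ⟨n + 2, _⟩ (by simp)⟩

/-- Contribution counts used in the encoding-decoding rule, for `i ≥ 3`:
codewords of `RC (i+1)` with left-most bit `0` number `N (i-2) + N (i-3)`;
codewords of `RC (i+2)` with left-most two bits `00` number `N (i-2)`;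
codewords of `RC (i+3)` beginning with `000`, resp. `010`, from the left number `0`. -/
theorem stmt7 (i : ℕ) (hi : 3 ≤ i) :
    ((RC (i + 1)).filter (fun c => c ⟨i, by omega⟩ = false)).card = N (i - 2) + N (i - 3) ∧
    ((RC (i + 2)).filter (fun c =>
      c ⟨i + 1, by omega⟩ = false ∧ c ⟨i, by omega⟩ = false)).card = N (i - 2) ∧
    ((RC (i + 3)).filter (fun c =>
      c ⟨i + 2, by omega⟩ = false ∧ c ⟨i + 1, by omega⟩ = false ∧
        c ⟨i, by omega⟩ = false)).card = 0 ∧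
    ((RC (i + 3)).filter (fun c =>
      c ⟨i + 2, by omega⟩ = false ∧ c ⟨i + 1, by omega⟩ = true ∧
        c ⟨i, by omega⟩ = false)).card = 0 := by
  obtain ⟨j, rfl⟩ : ∃ j, i = j + 3 := ⟨i - 3, by omega⟩
  have no_two_zeros : ∀ c ∈ RC (j + 3 + 3),
      ¬(c ⟨j + 5, by omega⟩ = false ∧ c ⟨j + 3, by omega⟩ = false) :=
    fun c hc h => mem_RC.1 hc _ _ rfl ⟨h.2, h.1⟩
  refine ⟨?_, ?_, ?_, ?_⟩
  · rw [← Finset.card_filter_add_card_filter_not (fun c => c ⟨j + 2, by omega⟩ = true),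
      Finset.filter_filter, Finset.filter_filter]
    refine congrArg₂ (· + ·) (card_filter_RC_eq_N (by omega) (by omega) fun c hc => ?_)
      (card_filter_RC_eq_N (by omega) (by omega) fun c hc => ?_)
    · exact hasPaddedHead_iff_of_eq_add_three rfl (mem_RC.1 hc)
    · rw [Bool.not_eq_true]
      exact hasPaddedHead_iff_of_eq_add_four rfl (mem_RC.1 hc)
  · exact card_filter_RC_eq_N (by omega) (by omega) fun c hc =>
      hasPaddedHead_iff_of_eq_add_four rfl (mem_RC.1 hc)
  · exact Finset.card_eq_zero.2 <| Finset.filter_eq_empty_iff.2 fun c hc h =>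
      no_two_zeros c hc ⟨h.1, h.2.2⟩
  · exact Finset.card_eq_zero.2 <| Finset.filter_eq_empty_iff.2 fun c hc h =>
      no_two_zeros c hc ⟨h.1, h.2.2⟩
end

section
/- The 1D RR-LOCO coding scheme is capacity-achieving on the left-most page: lim_{m→∞} ⌊log₂(N(m) − 1)⌋ / (m + 2) = log₂((1 + √5)/2), where ⌊log₂(N(m) − 1)⌋ is the message length per codeword after removing the all-ones codeword and m + 2 accounts for two bridging bits. -/
open Finset Filter Real Topology
open scoped goldenRatio

def NoAdjZeros {n : ℕ} (d : Fin n → Bool) : Prop :=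
  ∀ i j : Fin n, (j : ℕ) = i + 1 → ¬(d i = false ∧ d j = false)

instance (n : ℕ) : DecidablePred (@NoAdjZeros n) := fun d => by
  unfold NoAdjZeros; infer_instance

theorem noAdjZeros_cons_true {n : ℕ} (u : Fin n → Bool) :
    NoAdjZeros (Fin.cons true u : Fin (n + 1) → Bool) ↔ NoAdjZeros u := by
  refine ⟨fun h i j hij => h i.succ j.succ (by simp [hij]), fun h i j hij => ?_⟩
  cases i using Fin.cases with
  | zero => simp
  | succ i =>
    cases j using Fin.cases with
    | zero => simp at hij
    | succ j => simpa using h i j (by simpa using hij)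

theorem noAdjZeros_cons_false {n : ℕ} (t : Fin (n + 1) → Bool) :
    NoAdjZeros (Fin.cons false t : Fin (n + 2) → Bool) ↔ t 0 = true ∧ NoAdjZeros t := by
  refine ⟨fun h => ⟨?_, fun i j hij => h i.succ j.succ (by simp [hij])⟩, fun ⟨h0, h⟩ i j hij => ?_⟩
  · simpa using h 0 1 rfl
  cases i using Fin.cases with
  | zero =>
    obtain rfl : j = 1 := Fin.ext (by simpa using hij)
    simpa using h0
  | succ i =>
    cases j using Fin.cases with
    | zero => simp at hij
    | succ j => simpa using h i j (by simpa using hij)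

theorem card_filter_eq_sum_card_filter_cons {α : Type*} [Fintype α] [DecidableEq α] {n : ℕ}
    (P : (Fin (n + 1) → α) → Prop) [DecidablePred P] :
    #{d | P d} = ∑ a, #{t : Fin n → α | P (Fin.cons a t)} := by
  rw [card_eq_sum_card_fiberwise (f := fun d => d 0) (t := univ) (fun _ _ => mem_univ _)]
  refine sum_congr rfl fun a _ => ?_
  refine card_nbij' Fin.tail (fun t => Fin.cons a t) ?_ ?_ ?_ ?_ <;>
    simp only [coe_filter, mem_univ, true_and]
  · rintro d ⟨hd, rfl⟩
    simpa using hd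
  · intro t ht
    simpa using ht
  · rintro d ⟨-, rfl⟩
    exact Fin.cons_self_tail d
  · intro t _
    exact Fin.tail_cons (α := fun _ => α) a t

theorem card_noAdjZeros : ∀ n : ℕ, #{d : Fin n → Bool | NoAdjZeros d} = Nat.fib (n + 2)
  | 0 => by decide
  | 1 => by decide
  | n + 2 => by
    have card_head_true :
        #{t : Fin (n + 1) → Bool | t 0 = true ∧ NoAdjZeros t} = Nat.fib (n + 2) := by
      rw [card_filter_eq_sum_card_filter_cons, Fintype.sum_bool]
      simp [noAdjZeros_cons_true, card_noAdjZeros n]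
    rw [card_filter_eq_sum_card_filter_cons, Fintype.sum_bool]
    simp only [noAdjZeros_cons_true, noAdjZeros_cons_false, card_head_true, card_noAdjZeros (n + 1),
      Nat.fib_add_two]
    ring

def evenOddEquiv (m : ℕ) : Fin ((m + 1) / 2) ⊕ Fin (m / 2) ≃ Fin m where
  toFun := Sum.elim (fun j => ⟨2 * j, by omega⟩) (fun j => ⟨2 * j + 1, by omega⟩)
  invFun i := if h : (i : ℕ) % 2 = 0 then .inl ⟨i / 2, by omega⟩ else .inr ⟨i / 2, by omega⟩
  left_inv := by
    rintro (j | j)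
    · simp
    · simp [Fin.ext_iff]
      omega
  right_inv i := by
    dsimp only
    split_ifs <;> ext <;> simp <;> omega

theorem rrOk_iff_noAdjZeros {m : ℕ} (c : Fin m → Bool) :
    RRok m c ↔ NoAdjZeros (fun j => c (evenOddEquiv m (.inl j))) ∧
      NoAdjZeros (fun j => c (evenOddEquiv m (.inr j))) := by
  refine ⟨fun h => ⟨fun i j hij => h _ _ ?_, fun i j hij => h _ _ ?_⟩, fun ⟨he, ho⟩ i j hij => ?_⟩
  · simp [evenOddEquiv]; omega
  · simp [evenOddEquiv]; omega
  obtain ⟨i, rfl⟩ := (evenOddEquiv m).surjective i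
  obtain ⟨j, rfl⟩ := (evenOddEquiv m).surjective j
  rcases i with i | i <;> rcases j with j | j <;> simp [evenOddEquiv] at hij
  · exact he i j (by omega)
  · omega
  · omega
  · exact ho i j (by omega)

theorem N_eq_card_mul_card (m : ℕ) :
    N m = #{d : Fin ((m + 1) / 2) → Bool | NoAdjZeros d} *
      #{d : Fin (m / 2) → Bool | NoAdjZeros d} := by
  simp only [N, RC, ← Fintype.card_subtype, ← Fintype.card_prod]
  let split : (Fin m → Bool) ≃ (Fin ((m + 1) / 2) → Bool) × (Fin (m / 2) → Bool) :=
    ((evenOddEquiv m).arrowCongr (Equiv.refl Bool)).symm.trans (Equiv.sumArrowEquivProdArrow _ _ _)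
  exact Fintype.card_congr
    ((split.subtypeEquiv rrOk_iff_noAdjZeros).trans Equiv.subtypeProdEquivProd)

theorem N_eq_fib_mul_fib (m : ℕ) : N m = Nat.fib ((m + 1) / 2 + 2) * Nat.fib (m / 2 + 2) := by
  rw [N_eq_card_mul_card, card_noAdjZeros, card_noAdjZeros]

theorem le_of_fib_recurrence {a b : ℕ → ℝ} (ha : ∀ n, a (n + 2) = a (n + 1) + a n)
    (hb : ∀ n, b (n + 2) = b (n + 1) + b n) (h0 : a 0 ≤ b 0) (h1 : a 1 ≤ b 1) :
    ∀ n, a n ≤ b n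
  | 0 => h0
  | 1 => h1
  | n + 2 => by
    rw [ha, hb]
    exact add_le_add (le_of_fib_recurrence ha hb h0 h1 (n + 1)) (le_of_fib_recurrence ha hb h0 h1 n)

theorem goldenRatio_pow_add_two (n : ℕ) : φ ^ (n + 2) = φ ^ (n + 1) + φ ^ n := by
  linarith [goldenRatio_pow_sub_goldenRatio_pow n]

theorem cast_fib_add_two (n : ℕ) : (Nat.fib (n + 2) : ℝ) = Nat.fib (n + 1) + Nat.fib n := by
  rw [Nat.fib_add_two, Nat.cast_add, add_comm]

theorem goldenRatio_pow_le_fib (n : ℕ) : φ ^ n ≤ Nat.fib (n + 2) :=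
  le_of_fib_recurrence (b := fun n => (Nat.fib (n + 2) : ℝ)) goldenRatio_pow_add_two
    (fun n => cast_fib_add_two (n + 2)) (by norm_num)
    (by norm_num [Nat.fib_add_two]; linarith [goldenRatio_lt_two]) n

theorem fib_le_goldenRatio_pow (n : ℕ) : (Nat.fib (n + 2) : ℝ) ≤ φ ^ (n + 1) :=
  le_of_fib_recurrence (a := fun n => (Nat.fib (n + 2) : ℝ)) (b := fun n => φ ^ (n + 1))
    (fun n => cast_fib_add_two (n + 2)) (fun n => goldenRatio_pow_add_two (n + 1))
    (by norm_num; linarith [one_lt_goldenRatio])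
    (by norm_num [Nat.fib_add_two, goldenRatio_sq]; linarith [one_lt_goldenRatio]) n

theorem goldenRatio_pow_le_N (m : ℕ) : φ ^ m ≤ N m := by
  have hm : (m + 1) / 2 + m / 2 = m := by omega
  calc φ ^ m = φ ^ ((m + 1) / 2) * φ ^ (m / 2) := by rw [← pow_add, hm]
    _ ≤ N m := by
      rw [N_eq_fib_mul_fib, Nat.cast_mul]
      gcongr <;> exact goldenRatio_pow_le_fib _

theorem N_le_goldenRatio_pow (m : ℕ) : (N m : ℝ) ≤ φ ^ (m + 2) := by
  have hm : ((m + 1) / 2 + 1) + (m / 2 + 1) = m + 2 := by omega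
  calc (N m : ℝ) ≤ φ ^ ((m + 1) / 2 + 1) * φ ^ (m / 2 + 1) := by
        rw [N_eq_fib_mul_fib, Nat.cast_mul]
        gcongr <;> exact fib_le_goldenRatio_pow _
    _ = φ ^ (m + 2) := by rw [← pow_add, hm]

theorem tendsto_div_add_const_of_abs_sub_mul_le {f : ℕ → ℝ} {L C : ℝ} (c : ℝ)
    (h : ∀ᶠ m in atTop, |f m - m * L| ≤ C) :
    Tendsto (fun m => f m / (m + c)) atTop (𝓝 L) := by
  have hden : Tendsto (fun m : ℕ => (m : ℝ) + c) atTop atTop :=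
    tendsto_atTop_add_const_right _ c tendsto_natCast_atTop_atTop
  rw [tendsto_iff_norm_sub_tendsto_zero]
  refine squeeze_zero' (.of_forall fun _ => norm_nonneg _) ?_
    ((tendsto_const_nhds (x := C + |c * L|)).div_atTop hden)
  filter_upwards [h, hden.eventually_gt_atTop 0] with m hm hpos
  calc ‖f m / (m + c) - L‖ = |f m - m * L - c * L| / (m + c) := by
        rw [Real.norm_eq_abs, ← abs_of_pos hpos, ← abs_div, abs_of_pos hpos]
        congr 1
        field_simp
        ring
    _ ≤ (C + |c * L|) / (m + c) := by
        gcongr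
        exact (abs_sub _ _).trans (add_le_add hm le_rfl)

theorem abs_natLog_sub_logb_le_one (b n : ℕ) : |(Nat.log b n : ℝ) - logb b n| ≤ 1 := by
  have hlt : logb b n < Nat.log b n + 1 := by
    simpa only [natFloor_logb_natCast] using Nat.lt_floor_add_one (logb b n)
  rw [abs_le]
  constructor <;> linarith [natLog_le_logb n b]

theorem tendsto_natLog_div_of_pow_bounds {b : ℕ} (hb : 1 < b) {r K₁ K₂ : ℝ} (c : ℝ) (hr : 0 < r)
    (hK₁ : 0 < K₁) {u : ℕ → ℕ} (h : ∀ᶠ m in atTop, K₁ * r ^ m ≤ u m ∧ (u m : ℝ) ≤ K₂ * r ^ m) :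
    Tendsto (fun m => (Nat.log b (u m) : ℝ) / (m + c)) atTop (𝓝 (logb b r)) := by
  have hb' : (1 : ℝ) < b := by exact_mod_cast hb
  have hlogb : ∀ᶠ m in atTop, |logb b (u m) - m * logb b r| ≤ |logb b K₁| + |logb b K₂| := by
    filter_upwards [h] with m ⟨hlo, hhi⟩
    have hu : 0 < (u m : ℝ) := lt_of_lt_of_le (by positivity) hlo
    have hK₂ : 0 < K₂ := pos_of_mul_pos_left (hu.trans_le hhi) (by positivity)
    have hlo' := logb_le_logb_of_le hb' (by positivity) hlo
    have hhi' := logb_le_logb_of_le hb' hu hhi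
    rw [logb_mul hK₁.ne' (by positivity), logb_pow] at hlo'
    rw [logb_mul hK₂.ne' (by positivity), logb_pow] at hhi'
    rw [abs_le]
    constructor <;> linarith [neg_abs_le (logb b K₁), le_abs_self (logb b K₂),
      abs_nonneg (logb b K₁), abs_nonneg (logb b K₂)]
  refine tendsto_div_add_const_of_abs_sub_mul_le c (C := 1 + (|logb b K₁| + |logb b K₂|)) ?_
  filter_upwards [hlogb] with m hm
  calc |(Nat.log b (u m) : ℝ) - m * logb b r|
      ≤ |(Nat.log b (u m) : ℝ) - logb b (u m)| + |logb b (u m) - m * logb b r| := abs_sub_le _ _ _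
    _ ≤ 1 + (|logb b K₁| + |logb b K₂|) := add_le_add (abs_natLog_sub_logb_le_one _ _) hm

/-- The 1D RR-LOCO coding scheme is capacity-achieving on the left-most page:
`lim_{m→∞} ⌊log₂(N m - 1)⌋ / (m + 2) = log₂((1 + √5)/2)`. -/
theorem stmt12 :
    Filter.Tendsto (fun m : ℕ => (Nat.log 2 (N m - 1) : ℝ) / (m + 2)) Filter.atTop
      (nhds (Real.logb 2 ((1 + Real.sqrt 5) / 2))) := by
  -- `N m - 1 ≥ N m / 2` as soon as `N m ≥ 2`
  refine tendsto_natLog_div_of_pow_bounds (by norm_num) 2 goldenRatio_pos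
    (K₁ := 1 / 2) (K₂ := φ ^ 2) (by norm_num) ?_
  filter_upwards [eventually_ge_atTop 2] with m hm
  have hN_lo := goldenRatio_pow_le_N m
  have hN_hi := N_le_goldenRatio_pow m
  have hN_two : (2 : ℝ) ≤ N m := calc
    (2 : ℝ) ≤ φ ^ 2 := by rw [goldenRatio_sq]; linarith [one_lt_goldenRatio]
    _ ≤ φ ^ m := pow_le_pow_right₀ one_lt_goldenRatio.le hm
    _ ≤ N m := hN_lo
  rw [Nat.cast_sub (by exact_mod_cast one_le_two.trans hN_two), Nat.cast_one, ← pow_add, add_comm 2]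
  constructor <;> linarith
end
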